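/- Let G be a MAG containing a non-chordal cycle c = (O₀, O₁, …, O_m, O₀) of undirected edges, meaning consecutive vertices are neighbors and the induced subgraph on {O₀,…,O_m} contains no other edges, with m ≥ 3. Then in any induced subgraph H of G that contains the cycle c, none of the vertices O₀, …, O_m is removable. -/

import Mathlib

/-!
Let `y`, `w` be the two cycle neighbours of `x`. Chordlessness and length at least four make them
non-adjacent, so maximality yields a set `Z` m-separating them in `G`. Deleting vertices only
destroys m-connecting paths, so `Z \ {x}` still separates `y` and `w` once `x` is removed from
`H = G.induce S`. In `H` itself, however, `y - x - w` m-connects them given `Z \ {x}`: the undirected edges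
at `x` forbid arrowheads into `x` in an ancestral graph, so `x` is a non-collider. Hence deleting
`x` changes an m-separation statement.
-/

/-- A mixed graph with directed (`dir x y` : x → y), bidirected and undirected edges. -/
structure MixedGraph (V : Type*) where
  dir : V → V → Prop
  bi : V → V → Prop
  und : V → V → Prop
  bi_symm : ∀ x y, bi x y → bi y x
  und_symm : ∀ x y, und x y → und y x

namespace MixedGraph

variable {V : Type*}

def adj (G : MixedGraph V) (x y : V) : Prop :=
  G.dir x y ∨ G.dir y x ∨ G.bi x y ∨ G.und x y

/-- There is an arrowhead at `y` on the edge between `x` and `y`. -/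
def head (G : MixedGraph V) (x y : V) : Prop := G.dir x y ∨ G.bi x y

def pa (G : MixedGraph V) (x : V) : Set V := {y | G.dir y x}
def child (G : MixedGraph V) (x : V) : Set V := {y | G.dir x y}
def nbr (G : MixedGraph V) (x : V) : Set V := {y | G.und x y}
def spouse (G : MixedGraph V) (x : V) : Set V := {y | G.bi x y}

/-- `x` is an ancestor of `y` (every vertex is an ancestor of itself). -/
def anc (G : MixedGraph V) (x y : V) : Prop := Relation.ReflTransGen G.dir x y

def ancSet (G : MixedGraph V) (S : Set V) : Set V := {x | ∃ y ∈ S, G.anc x y}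

/-- The set of descendants of `x` (including `x` itself). -/
def desc (G : MixedGraph V) (x : V) : Set V := {y | G.anc x y}

/-- A path, encoded as a duplicate-free list of at least two vertices with
consecutive vertices adjacent. -/
def IsPath (G : MixedGraph V) (p : List V) : Prop :=
  p.Chain' G.adj ∧ p.Nodup ∧ 2 ≤ p.length

def IsPathBetween (G : MixedGraph V) (p : List V) (x y : V) : Prop :=
  G.IsPath p ∧ p.head? = some x ∧ p.getLast? = some y

/-- The vertex at (internal) position `i` of `p` is a collider: both incident
path edges have an arrowhead at it. -/
def ColliderAt (G : MixedGraph V) (p : List V) (i : ℕ) : Prop :=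
  ∃ a v c, p[i-1]? = some a ∧ p[i]? = some v ∧ p[i+1]? = some c ∧
    G.head a v ∧ G.head c v

/-- A collider path: every non-endpoint vertex is a collider. -/
def IsColliderPath (G : MixedGraph V) (p : List V) : Prop :=
  G.IsPath p ∧ ∀ i, 1 ≤ i → i + 1 < p.length → G.ColliderAt p i

/-- `p` is an m-connecting path between `x` and `y` relative to `Z`. -/
def MConn (G : MixedGraph V) (p : List V) (x y : V) (Z : Set V) : Prop :=
  G.IsPathBetween p x y ∧
  ∀ i v, 1 ≤ i → i + 1 < p.length → p[i]? = some v →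
    (G.ColliderAt p i → v ∈ G.ancSet ({x, y} ∪ Z)) ∧
    (¬ G.ColliderAt p i → v ∉ Z)

/-- `Z` m-separates `x` and `y` in `G`. -/
def MSep (G : MixedGraph V) (x y : V) (Z : Set V) : Prop :=
  ∀ p, ¬ G.MConn p x y Z

/-- Induced subgraph over a set `S` of vertices. -/
def induce (G : MixedGraph V) (S : Set V) : MixedGraph V where
  dir x y := G.dir x y ∧ x ∈ S ∧ y ∈ S
  bi x y := G.bi x y ∧ x ∈ S ∧ y ∈ S
  und x y := G.und x y ∧ x ∈ S ∧ y ∈ S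
  bi_symm := fun x y h => ⟨G.bi_symm x y h.1, h.2.2, h.2.1⟩
  und_symm := fun x y h => ⟨G.und_symm x y h.1, h.2.2, h.2.1⟩

/-- `X` is removable in `G`: the induced subgraph on the remaining vertices
imposes exactly the same m-separation relations over them as `G`. -/
def Removable (G : MixedGraph V) (X : V) : Prop :=
  ∀ Y W : V, Y ≠ X → W ≠ X → Y ≠ W →
    ∀ Z : Set V, Z ⊆ {v | v ≠ X ∧ v ≠ Y ∧ v ≠ W} →
      (G.MSep Y W Z ↔ (G.induce {v | v ≠ X}).MSep Y W Z)

/-- Ancestral: no directed cycles, no almost directed cycles, and endpoints of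
undirected edges have no parents or spouses. -/
def Ancestral (G : MixedGraph V) : Prop :=
  (∀ x y, G.dir x y → ¬ G.anc y x) ∧
  (∀ x y, G.bi x y → ¬ G.anc y x) ∧
  (∀ x y, G.und x y → ∀ z, ¬ G.dir z x ∧ ¬ G.bi z x)

/-- A maximal ancestral graph: ancestral, and any two non-adjacent vertices are
m-separated by some set. -/
def IsMAG (G : MixedGraph V) : Prop :=
  G.Ancestral ∧
  ∀ x y, x ≠ y → ¬ G.adj x y →
    ∃ Z : Set V, Z ⊆ {v | v ≠ x ∧ v ≠ y} ∧ G.MSep x y Z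

/-- Markov boundary of `x`: the vertices with a collider path to `x`. -/
def Mb (G : MixedGraph V) (x : V) : Set V :=
  {y | ∃ p, G.IsColliderPath p ∧ p.head? = some y ∧ p.getLast? = some x}

/-- District of `x`: vertices joined to `x` by a path of bidirected edges. -/
def district (G : MixedGraph V) (x : V) : Set V :=
  {y | Relation.ReflTransGen G.bi x y}

/-- `Pa⁺(x) = Pa(x) ∪ Dis(x) ∪ Pa(Dis(x)) ∪ N(x)`. -/
def paPlus (G : MixedGraph V) (x : V) : Set V :=
  G.pa x ∪ G.district x ∪ (⋃ y ∈ G.district x, G.pa y) ∪ G.nbr x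

noncomputable def deltaPlus [Fintype V] (G : MixedGraph V) : ℕ :=
  Finset.univ.sup fun z : V => (G.paPlus z).ncard

/-- Condition 1 of the graphical characterization of removability. -/
def RemCond1 (G : MixedGraph V) (X : V) : Prop :=
  ∀ Y Z : V, G.adj X Y → Z ∈ G.child X ∪ G.nbr X → Z ≠ Y → G.adj Y Z

/-- Condition 2 of the graphical characterization of removability. -/
def RemCond2 (G : MixedGraph V) (X : V) : Prop :=
  ∀ (p : List V) (Y Z : V), G.IsColliderPath p → p.head? = some X →
    p.getLast? = some Y → Z ∉ p → (∀ v ∈ p.dropLast, G.dir v Z) → G.adj Y Z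

end MixedGraph


namespace MixedGraph

variable {V : Type*} {G : MixedGraph V} {T : Set V} {p : List V} {a b v x y w : V}

lemma adj_of_induce (h : (G.induce T).adj a b) : G.adj a b ∧ a ∈ T ∧ b ∈ T := by
  unfold adj induce at *
  aesop

lemma head_induce_iff : (G.induce T).head a b ↔ G.head a b ∧ a ∈ T ∧ b ∈ T := by
  simp only [head, induce]
  tauto

lemma anc_of_induce (h : (G.induce T).anc a b) : G.anc a b :=
  Relation.ReflTransGen.mono (fun _ _ h => h.1) _ _ h

lemma IsPath.of_induce (hp : (G.induce T).IsPath p) : G.IsPath p :=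
  ⟨hp.1.imp fun _ _ h => (adj_of_induce h).1, hp.2⟩

lemma IsPath.mem_of_induce (hp : (G.induce T).IsPath p) (hv : v ∈ p) : v ∈ T := by
  obtain ⟨i, hi, rfl⟩ := List.getElem_of_mem hv
  have hchain := List.isChain_iff_getElem.1 hp.1
  rcases Nat.lt_or_ge (i + 1) p.length with h | h
  · exact (adj_of_induce (hchain i h)).2.1
  · obtain ⟨j, rfl⟩ : ∃ j, i = j + 1 := ⟨i - 1, by have := hp.2.2; omega⟩
    exact (adj_of_induce (hchain j hi)).2.2

lemma colliderAt_induce_iff (hp : ∀ v ∈ p, v ∈ T) {i : ℕ} :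
    (G.induce T).ColliderAt p i ↔ G.ColliderAt p i := by
  constructor
  · rintro ⟨a, v, c, ha, hv, hc, hav, hcv⟩
    exact ⟨a, v, c, ha, hv, hc, (head_induce_iff.1 hav).1, (head_induce_iff.1 hcv).1⟩
  · rintro ⟨a, v, c, ha, hv, hc, hav, hcv⟩
    have hT {k : ℕ} {u : V} (hu : p[k]? = some u) : u ∈ T := hp u (List.mem_of_getElem? hu)
    exact ⟨a, v, c, ha, hv, hc, head_induce_iff.2 ⟨hav, hT ha, hT hv⟩,
      head_induce_iff.2 ⟨hcv, hT hc, hT hv⟩⟩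

/-- Every vertex of a path of `G.induce T` lies in `T`, so `Z'` may differ from `Z` outside `T`
without affecting the non-colliders. -/
lemma MConn.of_induce {Z Z' : Set V} (h : (G.induce T).MConn p x y Z) (hZ : Z ⊆ Z')
    (hZ' : Z' ∩ T ⊆ Z) : G.MConn p x y Z' := by
  obtain ⟨⟨hpath, hx, hy⟩, hint⟩ := h
  have hT : ∀ v ∈ p, v ∈ T := fun _ hv => hpath.mem_of_induce hv
  refine ⟨⟨hpath.of_induce, hx, hy⟩, fun i v hi hil hv => ?_⟩
  obtain ⟨hcol, hncol⟩ := hint i v hi hil hv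
  rw [colliderAt_induce_iff hT] at hcol hncol
  refine ⟨fun hc => ?_, fun hc hvZ => hncol hc (hZ' ⟨hvZ, hT v (List.mem_of_getElem? hv)⟩)⟩
  obtain ⟨u, hu, hvu⟩ := hcol hc
  exact ⟨u, Set.union_subset_union_right _ hZ hu, anc_of_induce hvu⟩

lemma MSep.induce {Z Z' : Set V} (h : G.MSep x y Z') (hZ : Z ⊆ Z') (hZ' : Z' ∩ T ⊆ Z) :
    (G.induce T).MSep x y Z :=
  fun p hp => h p (hp.of_induce hZ hZ')

lemma mConn_und_und {Z : Set V} (hyx : G.und y x) (hxw : G.und x w) (hhead : ¬ G.head y x)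
    (hxZ : x ∉ Z) (hy : y ≠ x) (hw : w ≠ x) (hyw : y ≠ w) : G.MConn [y, x, w] y w Z := by
  refine ⟨⟨⟨?_, by simp [hy, hyw, hw.symm], by simp⟩, rfl, rfl⟩, fun i v hi hil hv => ?_⟩
  · exact List.isChain_cons_cons.2 ⟨.inr (.inr (.inr hyx)),
      List.isChain_pair.2 (.inr (.inr (.inr hxw)))⟩
  · obtain rfl : i = 1 := by simp only [List.length_cons, List.length_nil] at hil; omega
    obtain rfl := Option.some.inj hv
    refine ⟨fun ⟨a, u, _, ha, hu, _, hau, _⟩ => ?_, fun _ => hxZ⟩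
    obtain rfl := Option.some.inj ha
    obtain rfl := Option.some.inj hu
    exact (hhead hau).elim

theorem not_removable_of_msep_induce {Z : Set V} (hyx : G.und y x) (hxw : G.und x w)
    (hhead : ¬ G.head y x) (hy : y ≠ x) (hw : w ≠ x) (hyw : y ≠ w)
    (hZ : Z ⊆ {v | v ≠ x ∧ v ≠ y ∧ v ≠ w}) (hsep : (G.induce {v | v ≠ x}).MSep y w Z) :
    ¬ G.Removable x := fun hrem =>
  (hrem y w hy hw hyw Z hZ).2 hsep [y, x, w]
    (mConn_und_und hyx hxw hhead (fun hx => (hZ hx).1 rfl) hy hw hyw)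

end MixedGraph

def CyclicSucc (n i j : ℕ) : Prop := j = i + 1 ∨ (i + 1 = n ∧ j = 0)

section ChordlessCycle

variable {V : Type*} {G : MixedGraph V} {l : List V}

lemma und_getElem_of_cyclicSucc (hchain : l.IsChain G.und)
    (hwrap : ∀ a b, l.head? = some a → l.getLast? = some b → G.und b a)
    {i j : ℕ} (hi : i < l.length) (hj : j < l.length) (hij : CyclicSucc l.length i j) :
    G.und l[i] l[j] := by
  rcases hij with rfl | ⟨hin, rfl⟩
  · exact List.isChain_iff_getElem.1 hchain i hj
  · apply hwrap
    · rw [List.head?_eq_getElem?, List.getElem?_eq_getElem hj]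
    · rw [List.getLast?_eq_getElem?, show l.length - 1 = i by omega, List.getElem?_eq_getElem hi]

lemma cyclicSucc_of_adj (hnodup : l.Nodup)
    (hchordless : ∀ a ∈ l, ∀ b ∈ l, a ≠ b → G.adj a b →
      ([a, b] <:+: l ∨ [b, a] <:+: l ∨
        (l.head? = some a ∧ l.getLast? = some b) ∨
        (l.head? = some b ∧ l.getLast? = some a)))
    {i j : ℕ} (hi : i < l.length) (hj : j < l.length) (hij : i ≠ j) (hadj : G.adj l[i] l[j]) :
    CyclicSucc l.length i j ∨ CyclicSucc l.length j i := by
  have hpos {k : ℕ} (hk : k < l.length) {m : ℕ} (h : l[m]? = some l[k]) : m = k :=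
    ((List.getElem?_inj hk hnodup).1 ((List.getElem?_eq_getElem hk).trans h.symm)).symm
  have hpair {k m : ℕ} (hk : k < l.length) (hm : m < l.length) (h : [l[k], l[m]] <:+: l) :
      m = k + 1 := by
    obtain ⟨n, -, hn⟩ := List.infix_iff_getElem?.1 h
    have h0 := hpos hk (hn 0 (by simp))
    have h1 := hpos hm (hn 1 (by simp))
    omega
  have hfirst {k : ℕ} (hk : k < l.length) (h : l.head? = some l[k]) : k = 0 :=
    (hpos hk (by rwa [List.head?_eq_getElem?] at h)).symm
  have hlast {k : ℕ} (hk : k < l.length) (h : l.getLast? = some l[k]) : k + 1 = l.length := by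
    have := hpos hk (by rwa [List.getLast?_eq_getElem?] at h)
    omega
  rcases hchordless _ (List.getElem_mem hi) _ (List.getElem_mem hj)
    (hnodup.getElem_inj_iff.not.2 hij) hadj with h | h | ⟨h0, h1⟩ | ⟨h0, h1⟩
  · exact .inl (.inl (hpair hi hj h))
  · exact .inr (.inl (hpair hj hi h))
  · exact .inr (.inr ⟨hlast hj h1, hfirst hi h0⟩)
  · exact .inl (.inr ⟨hlast hi h1, hfirst hj h0⟩)

lemma exists_und_und_not_adj (hlen : 4 ≤ l.length) (hchain : l.IsChain G.und) (hnodup : l.Nodup)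
    (hwrap : ∀ a b, l.head? = some a → l.getLast? = some b → G.und b a)
    (hchordless : ∀ a ∈ l, ∀ b ∈ l, a ≠ b → G.adj a b →
      ([a, b] <:+: l ∨ [b, a] <:+: l ∨
        (l.head? = some a ∧ l.getLast? = some b) ∨
        (l.head? = some b ∧ l.getLast? = some a)))
    {x : V} (hx : x ∈ l) :
    ∃ y ∈ l, ∃ w ∈ l, G.und y x ∧ G.und x w ∧ y ≠ x ∧ w ≠ x ∧ y ≠ w ∧ ¬ G.adj y w := by
  obtain ⟨i, hi, rfl⟩ := List.getElem_of_mem hx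
  obtain ⟨j, hj, hji⟩ : ∃ j < l.length, CyclicSucc l.length j i :=
    ⟨if i = 0 then l.length - 1 else i - 1, by split <;> omega,
      by unfold CyclicSucc; split <;> omega⟩
  obtain ⟨k, hk, hik⟩ : ∃ k < l.length, CyclicSucc l.length i k :=
    ⟨if i + 1 = l.length then 0 else i + 1, by split <;> omega,
      by unfold CyclicSucc; split <;> omega⟩
  have hne {p q : ℕ} (hp : p < l.length) (hq : q < l.length) (h : p ≠ q) : l[p] ≠ l[q] :=
    hnodup.getElem_inj_iff.not.2 h
  unfold CyclicSucc at hji hik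
  refine ⟨l[j], List.getElem_mem hj, l[k], List.getElem_mem hk,
    und_getElem_of_cyclicSucc hchain hwrap hj hi hji,
    und_getElem_of_cyclicSucc hchain hwrap hi hk hik,
    hne hj hi (by omega), hne hk hi (by omega), hne hj hk (by omega), fun hadj => ?_⟩
  rcases cyclicSucc_of_adj hnodup hchordless hj hk (by omega) hadj with h | h <;>
    unfold CyclicSucc at h <;> omega

end ChordlessCycle

open MixedGraph in
/-- if a MAG `G` contains a chordless cycle `c` of undirected
edges of length ≥ 4 (consecutive vertices are neighbors and no other pair of
cycle vertices is adjacent), then no vertex of `c` is removable in any induced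
subgraph of `G` containing the cycle. -/
theorem stmt13 {V : Type*} (G : MixedGraph V) (hG : G.IsMAG)
    (c : List V) (hlen : 4 ≤ c.length)
    (hchain : c.Chain' G.und) (hnodup : c.Nodup)
    (hwrap : ∀ a b, c.head? = some a → c.getLast? = some b → G.und b a)
    (hchordless : ∀ a ∈ c, ∀ b ∈ c, a ≠ b → G.adj a b →
      ([a, b] <:+: c ∨ [b, a] <:+: c ∨
        (c.head? = some a ∧ c.getLast? = some b) ∨
        (c.head? = some b ∧ c.getLast? = some a))) :
    ∀ S : Set V, (∀ v ∈ c, v ∈ S) → ∀ x ∈ c, ¬ (G.induce S).Removable x := by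
  intro S hS x hx
  obtain ⟨y, hy, w, hw, hyx, hxw, hne_yx, hne_wx, hne_yw, hnadj⟩ :=
    exists_und_und_not_adj hlen hchain hnodup hwrap hchordless hx
  obtain ⟨Z, hZ, hsep⟩ := hG.2 y w hne_yw hnadj
  have hhead : ¬ (G.induce S).head y x := fun h =>
    have ⟨hdir, hbi⟩ := hG.1.2.2 x w hxw y
    (head_induce_iff.1 h).1.elim hdir hbi
  refine not_removable_of_msep_induce ⟨hyx, hS y hy, hS x hx⟩ ⟨hxw, hS x hx, hS w hw⟩ hhead
    hne_yx hne_wx hne_yw (Z := Z \ {x}) (fun v hv => ⟨hv.2, hZ hv.1⟩) ?_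
  exact (hsep.induce subset_rfl Set.inter_subset_left).induce Set.sdiff_subset subset_rfl
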